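/- arXiv:2110.02605 — 2 statements merged into one kernel-verified Lean document; each statement's English description precedes it below -/
import Mathlib

section
/- Let H be a real inner product space with inner product a and norm ‖·‖_a, and let b be another inner product on H with norm ‖·‖_b. Suppose (λ, u) satisfies a(u,v) = λ b(u,v) for all v in a subspace V containing u, with ‖u‖_b = 1 and λ > 0. Let G u be the a-orthogonal projection of u onto a closed subspace, and suppose ‖u − R‖_b ≤ M ‖u − G u‖_a for some R ∈ H and constant M ≥ 0, and λ_h ‖R‖_b² ≤ ‖G u‖_a². Then λ_h / (1 + M² λ_h) ≤ λ. -/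
open Real

/-- Cauchy–Schwarz for a symmetric positive semidefinite bilinear form. -/
lemma cs_aux {H : Type*} [AddCommGroup H] [Module ℝ H]
    (b : H →ₗ[ℝ] H →ₗ[ℝ] ℝ)
    (hbsymm : ∀ x y : H, b x y = b y x)
    (hbpsd : ∀ x : H, 0 ≤ b x x) (x y : H) :
    (b x y) ^ 2 ≤ b x x * b y y := by
  have key : ∀ t : ℝ, 0 ≤ b x x * (t * t) + 2 * b x y * t + b y y := by
    intro t
    have h := hbpsd (t • x + y)
    simp only [map_add, map_smul, LinearMap.add_apply, LinearMap.smul_apply,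
      smul_eq_mul] at h
    rw [hbsymm y x] at h
    ring_nf at h ⊢
    linarith
  have h := discrim_le_zero key
  rw [discrim] at h
  nlinarith [h]

set_option maxHeartbeats 1000000 in
/-- Abstract lower eigenvalue bound: if `(lam, u)` is an eigenpair
(`a(u,v) = lam · b(u,v)` for all `v` in a subspace `V` containing `u`)
with `b`-normalization `b u u = 1` and `lam > 0`, `Gu` is the `a`-orthogonal
projection of `u` (so `a (u - Gu) Gu = 0`), `‖u - R‖_b ≤ M ‖u - Gu‖_a`
for some `R` and `M ≥ 0`, and `lam_h ‖R‖_b² ≤ ‖Gu‖_a²` with `lam_h > 0`,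
then `lam_h / (1 + M² lam_h) ≤ lam`. -/
theorem stmt_1 {H : Type*} [AddCommGroup H] [Module ℝ H]
    (a b : H →ₗ[ℝ] H →ₗ[ℝ] ℝ)
    (hasymm : ∀ x y : H, a x y = a y x)
    (hapsd : ∀ x : H, 0 ≤ a x x)
    (hbsymm : ∀ x y : H, b x y = b y x)
    (hbpsd : ∀ x : H, 0 ≤ b x x)
    (V : Submodule ℝ H) (u : H) (huV : u ∈ V)
    (lam : ℝ) (hlam : 0 < lam)
    (heig : ∀ v ∈ V, a u v = lam * b u v)
    (hnorm : b u u = 1)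
    (Gu : H) (hGu : a (u - Gu) Gu = 0)
    (R : H) (M : ℝ) (hM : 0 ≤ M)
    (hL2 : Real.sqrt (b (u - R) (u - R)) ≤ M * Real.sqrt (a (u - Gu) (u - Gu)))
    (lam_h : ℝ) (hlamh : 0 < lam_h)
    (hRR : lam_h * b R R ≤ a Gu Gu) :
    lam_h / (1 + M ^ 2 * lam_h) ≤ lam := by
  have hauu : a u u = lam := by rw [heig u huV, hnorm, mul_one]
  -- expansions
  have exp1 : a (u - Gu) (u - Gu) = a u u - a u Gu - a Gu u + a Gu Gu := by
    simp only [map_sub, LinearMap.sub_apply]; ring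
  have exp2 : a (u - Gu) Gu = a u Gu - a Gu Gu := by
    simp only [map_sub, LinearMap.sub_apply]
  set E := a (u - Gu) (u - Gu) with hE
  have hEnn : 0 ≤ E := hapsd _
  have hPval : a Gu Gu = lam - E := by
    rw [exp2] at hGu
    linarith [exp1, hauu, hasymm Gu u]
  set e := Real.sqrt E with he
  set r := Real.sqrt (b R R) with hr
  set e' := Real.sqrt (b (u - R) (u - R)) with he'
  have he2 : e ^ 2 = E := Real.sq_sqrt hEnn
  have hr2 : r ^ 2 = b R R := Real.sq_sqrt (hbpsd R)
  have he'2 : e' ^ 2 = b (u - R) (u - R) := Real.sq_sqrt (hbpsd _)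
  have henn : 0 ≤ e := Real.sqrt_nonneg _
  have hrnn : 0 ≤ r := Real.sqrt_nonneg _
  have he'nn : 0 ≤ e' := Real.sqrt_nonneg _
  -- Cauchy-Schwarz for b
  have hcs : (b R (u - R)) ^ 2 ≤ b R R * b (u - R) (u - R) :=
    cs_aux b hbsymm hbpsd R (u - R)
  have hcs' : b R (u - R) ≤ r * e' := by
    nlinarith [mul_nonneg hrnn he'nn]
  -- triangle inequality: 1 ≤ r + e'
  have hexp : b u u = b R R + 2 * b R (u - R) + b (u - R) (u - R) := by
    have h1 : b (R + (u - R)) (R + (u - R))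
        = b R R + b R (u - R) + b (u - R) R + b (u - R) (u - R) := by
      simp only [map_add, LinearMap.add_apply]; ring
    have h2 : R + (u - R) = u := by abel
    rw [h2] at h1
    rw [h1, hbsymm (u - R) R]; ring
  have hone : (1:ℝ) ≤ (r + e') ^ 2 := by
    rw [hnorm] at hexp
    nlinarith
  have htri : 1 ≤ r + e' := by nlinarith [add_nonneg hrnn he'nn]
  have hkey : 1 ≤ r + M * e := by linarith [hL2]
  -- final
  have hlamE : lam_h * r ^ 2 + e ^ 2 ≤ lam := by
    rw [hr2, he2]; linarith [hRR, hPval]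
  have hden : (0:ℝ) < 1 + M ^ 2 * lam_h := by positivity
  rw [div_le_iff₀ hden]
  have hme : 0 ≤ M * e := mul_nonneg hM henn
  have h1 : (1:ℝ) ≤ (r + M * e) ^ 2 := by nlinarith
  have h2 : lam_h * (r + M * e) ^ 2
      ≤ (lam_h * r ^ 2 + e ^ 2) * (1 + M ^ 2 * lam_h) := by
    nlinarith [sq_nonneg (M * lam_h * r - e), hlamh.le]
  have h3 : (lam_h * r ^ 2 + e ^ 2) * (1 + M ^ 2 * lam_h)
      ≤ lam * (1 + M ^ 2 * lam_h) :=
    mul_le_mul_of_nonneg_right hlamE hden.le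
  nlinarith [h1, h2, h3, hlamh.le]
end

section
/- Let V_h be a finite-dimensional real inner product space with inner products a and b, let λ_{CR,1} > 0 be its smallest eigenvalue for the pair (a, b), and let κ, H > 0 and λ₁ > 0 be such that λ₁ ≥ λ_{CR,1}/(1 + κ² λ_{CR,1} H²) is claimed whenever the abstract hypothesis ‖u − I u‖_b ≤ κ H ‖u − I u‖_a holds for an a-orthogonal projection-like operator I: V → V_h satisfying a(u − I u, v_h) = 0 for all v_h ∈ V_h and eigenfunction u with ‖u‖_b = 1, a(u,u) = λ₁. Then indeed λ_{CR,1}/(1 + κ² H² λ_{CR,1}) ≤ λ₁. -/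
/-- Cauchy–Schwarz for a symmetric positive semidefinite bilinear form. -/
lemma cs_psd {H' : Type*} [AddCommGroup H'] [Module ℝ H']
    (b : H' →ₗ[ℝ] H' →ₗ[ℝ] ℝ)
    (hbsymm : ∀ x y : H', b x y = b y x)
    (hbpsd : ∀ x : H', 0 ≤ b x x) (x y : H') :
    (b x y) ^ 2 ≤ b x x * b y y := by
  have h : ∀ t : ℝ, 0 ≤ b y y * (t * t) + (2 * b x y) * t + b x x := by
    intro t
    have h0 := hbpsd (x + t • y)
    simp only [map_add, map_smul, LinearMap.add_apply, LinearMap.smul_apply,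
      smul_eq_mul] at h0
    rw [hbsymm y x] at h0
    nlinarith [h0]
  have hd := discrim_le_zero h
  rw [discrim] at hd
  nlinarith [hd]

/-- Pure real-arithmetic core of the Carstensen–Gedicke bound. -/
lemma cg_arith (lamCR c lam₁ sα sβ sB A bei : ℝ)
    (hlamCR : 0 < lamCR) (hc : 0 < c) (hlam₁ : 0 < lam₁)
    (hsα0 : 0 ≤ sα) (hsβ0 : 0 ≤ sβ) (hsB0 : 0 ≤ sB) (hA0 : 0 ≤ A)
    (hpyth : lam₁ = sα ^ 2 + A)
    (hbexp : 1 = sβ ^ 2 + 2 * bei + sB ^ 2)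
    (hcs : bei ^ 2 ≤ sβ ^ 2 * sB ^ 2)
    (hR : lamCR * sB ^ 2 ≤ A)
    (happ : sβ ≤ c * sα) :
    lamCR ≤ lam₁ * (1 + c ^ 2 * lamCR) := by
  -- triangle inequality: 1 ≤ sβ + sB
  have h1 : bei ≤ sβ * sB := by
    nlinarith [sq_nonneg (sβ * sB - bei), mul_nonneg hsβ0 hsB0]
  have htri : 1 ≤ sβ + sB := by nlinarith [sq_nonneg (sβ + sB)]
  by_cases hx : c * sα ≤ 1
  · have hsB1 : 1 - c * sα ≤ sB := by linarith
    have hBge : (1 - c * sα) ^ 2 ≤ sB ^ 2 := by nlinarith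
    have key : lamCR * (1 - c * sα) ^ 2 + sα ^ 2 ≤ lam₁ := by nlinarith
    have hmul : c ^ 2 * lamCR ≤ c ^ 2 * (lam₁ * (1 + c ^ 2 * lamCR)) := by
      nlinarith [sq_nonneg ((1 + c ^ 2 * lamCR) * (c * sα) - c ^ 2 * lamCR),
        mul_le_mul_of_nonneg_left key
          (by positivity : (0:ℝ) ≤ c ^ 2 * (1 + c ^ 2 * lamCR))]
    exact le_of_mul_le_mul_left hmul (by positivity)
  · push_neg at hx
    have h1' : sα ^ 2 ≤ lam₁ := by nlinarith
    have hcl : 1 < c ^ 2 * lam₁ := by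
      nlinarith [mul_le_mul_of_nonneg_left h1' (sq_nonneg c)]
    nlinarith [mul_lt_mul_of_pos_right hcl hlamCR]

/-- Abstract Carstensen–Gedicke lower eigenvalue bound: if `λ_{CR,1}` is a lower
bound of the discrete Rayleigh quotient on `V_h` (`λ_{CR,1} b(v,v) ≤ a(v,v)` for
all `v ∈ V_h`), `I u ∈ V_h` satisfies `a(u − I u, v_h) = 0` for all `v_h ∈ V_h`,
`‖u − I u‖_b ≤ κ H ‖u − I u‖_a`, and `u` is a `b`-normalized eigenfunction with
`b(u,u) = 1` and `a(u,u) = λ₁ > 0`, then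
`λ_{CR,1}/(1 + κ² H² λ_{CR,1}) ≤ λ₁`. -/
theorem stmt_15 {H' : Type*} [AddCommGroup H'] [Module ℝ H']
    (a b : H' →ₗ[ℝ] H' →ₗ[ℝ] ℝ)
    (hasymm : ∀ x y : H', a x y = a y x)
    (hapsd : ∀ x : H', 0 ≤ a x x)
    (hbsymm : ∀ x y : H', b x y = b y x)
    (hbpsd : ∀ x : H', 0 ≤ b x x)
    (Vh : Submodule ℝ H') (lamCR κ Hm lam₁ : ℝ)
    (hlamCR : 0 < lamCR) (hκ : 0 < κ) (hH : 0 < Hm) (hlam₁ : 0 < lam₁)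
    (hRR : ∀ v ∈ Vh, lamCR * b v v ≤ a v v)
    (u Iu : H') (hIu : Iu ∈ Vh)
    (horth : ∀ v ∈ Vh, a (u - Iu) v = 0)
    (happrox : Real.sqrt (b (u - Iu) (u - Iu)) ≤
        κ * Hm * Real.sqrt (a (u - Iu) (u - Iu)))
    (hbnorm : b u u = 1) (hanorm : a u u = lam₁) :
    lamCR / (1 + κ ^ 2 * Hm ^ 2 * lamCR) ≤ lam₁ := by
  have hα0 : 0 ≤ a (u - Iu) (u - Iu) := hapsd _
  have hβ0 : 0 ≤ b (u - Iu) (u - Iu) := hbpsd _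
  have hB0 : 0 ≤ b Iu Iu := hbpsd Iu
  have hA0 : 0 ≤ a Iu Iu := hapsd Iu
  have hortho : a (u - Iu) Iu = 0 := horth Iu hIu
  have hortho' : a Iu (u - Iu) = 0 := (hasymm Iu _).trans hortho
  have hue : u = (u - Iu) + Iu := by abel
  -- Pythagoras
  have hpyth : lam₁ = a (u - Iu) (u - Iu) + a Iu Iu := by
    have h1 : a u u = a ((u - Iu) + Iu) ((u - Iu) + Iu) := by rw [← hue]
    simp only [map_add, LinearMap.add_apply] at h1
    rw [hanorm, hortho, hortho'] at h1
    linarith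
  -- b-expansion
  have hbexp : 1 = b (u - Iu) (u - Iu) + 2 * b (u - Iu) Iu + b Iu Iu := by
    have h1 : b u u = b ((u - Iu) + Iu) ((u - Iu) + Iu) := by rw [← hue]
    simp only [map_add, LinearMap.add_apply] at h1
    rw [hbnorm, hbsymm Iu (u - Iu)] at h1
    linarith
  have hcs : (b (u - Iu) Iu) ^ 2 ≤ b (u - Iu) (u - Iu) * b Iu Iu :=
    cs_psd b hbsymm hbpsd _ _
  have hR : lamCR * b Iu Iu ≤ a Iu Iu := hRR Iu hIu
  have hsα2 : Real.sqrt (a (u - Iu) (u - Iu)) ^ 2 = a (u - Iu) (u - Iu) :=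
    Real.sq_sqrt hα0
  have hsβ2 : Real.sqrt (b (u - Iu) (u - Iu)) ^ 2 = b (u - Iu) (u - Iu) :=
    Real.sq_sqrt hβ0
  have hsB2 : Real.sqrt (b Iu Iu) ^ 2 = b Iu Iu := Real.sq_sqrt hB0
  have hc0 : 0 < κ * Hm := mul_pos hκ hH
  have key := cg_arith lamCR (κ * Hm) lam₁
      (Real.sqrt (a (u - Iu) (u - Iu))) (Real.sqrt (b (u - Iu) (u - Iu)))
      (Real.sqrt (b Iu Iu)) (a Iu Iu) (b (u - Iu) Iu)
      hlamCR hc0 hlam₁ (Real.sqrt_nonneg _) (Real.sqrt_nonneg _)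
      (Real.sqrt_nonneg _) hA0
      (by rw [hsα2]; linarith) (by rw [hsβ2, hsB2]; linarith)
      (by rw [hsβ2, hsB2]; exact hcs) (by rw [hsB2]; exact hR) happrox
  have hden : 0 < 1 + κ ^ 2 * Hm ^ 2 * lamCR := by positivity
  rw [div_le_iff₀ hden]
  calc lamCR ≤ lam₁ * (1 + (κ * Hm) ^ 2 * lamCR) := key
    _ = lam₁ * (1 + κ ^ 2 * Hm ^ 2 * lamCR) := by ring
end
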